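/- arXiv:2605.15727 — 3 statements merged into one kernel-verified Lean document; each statement's English description precedes it below -/
import Mathlib

section
/- (Katz–Shen refinement of Plünnecke–Ruzsa) For every 0 < ε < 1 and every positive integer k there exists a constant C = C(ε, k) > 0 such that the following holds. Let G be an abelian group and let X, B1, …, Bk be finite nonempty subsets of G. Then there exists a subset X' ⊆ X with |X'| > (1 − ε)·|X| such that |X' + B1 + ⋯ + Bk| · |X|^(k−1) ≤ C · |X + B1| · |X + B2| ⋯ |X + Bk|. -/
open Finset Pointwise

namespace KSproof

open scoped NNRat

variable {H : Type*} [AddCommGroup H] [DecidableEq H]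
variable {K : Type*} [AddCommGroup K] [DecidableEq K]

/-- `n`-fold iterated sumset of `B`. -/
def iterAdd (n : ℕ) (B : Finset H) : Finset H := ∑ _i ∈ Finset.range n, B

lemma iterAdd_zero (B : Finset H) : iterAdd 0 B = 0 :=
  Finset.sum_range_zero _

lemma iterAdd_succ (n : ℕ) (B : Finset H) : iterAdd (n + 1) B = iterAdd n B + B :=
  Finset.sum_range_succ (fun _ => B) n

lemma product_add_product (s s' : Finset H) (t t' : Finset K) :
    (s ×ˢ t) + (s' ×ˢ t') = (s + s') ×ˢ (t + t') := by
  ext ⟨a, b⟩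
  simp only [Finset.mem_add, Finset.mem_product]
  constructor
  · rintro ⟨⟨y1, y2⟩, ⟨hy1, hy2⟩, ⟨z1, z2⟩, ⟨hz1, hz2⟩, h⟩
    rw [Prod.ext_iff] at h
    exact ⟨⟨y1, hy1, z1, hz1, h.1⟩, ⟨y2, hy2, z2, hz2, h.2⟩⟩
  · rintro ⟨⟨y1, hy1, z1, hz1, h1⟩, ⟨y2, hy2, z2, hz2, h2⟩⟩
    exact ⟨(y1, y2), ⟨hy1, hy2⟩, (z1, z2), ⟨hz1, hz2⟩, by
      rw [Prod.ext_iff]; exact ⟨h1, h2⟩⟩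

lemma sum_product_add {ι : Type*} (s : Finset ι) (C : ι → Finset H) (D : ι → Finset K) :
    ∑ i ∈ s, (C i ×ˢ D i) = (∑ i ∈ s, C i) ×ˢ (∑ i ∈ s, D i) := by
  induction s using Finset.cons_induction with
  | empty =>
    simp only [Finset.sum_empty]
    ext ⟨a, b⟩
    simp [Finset.mem_product, Finset.mem_zero, Prod.ext_iff]
  | cons a s ha ih =>
    simp only [Finset.sum_cons, ih, product_add_product]

lemma add_biUnion' {ι : Type*} (s : Finset H) (u : Finset ι) (f : ι → Finset H) :
    s + u.biUnion f = u.biUnion fun i => s + f i := by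
  ext x
  simp only [Finset.mem_add, Finset.mem_biUnion]
  constructor
  · rintro ⟨y, hy, z, hz, h⟩
    obtain ⟨i, hi, hzi⟩ := hz
    exact ⟨i, hi, y, hy, z, hzi, h⟩
  · rintro ⟨i, hi, y, hy, z, hz, h⟩
    exact ⟨y, hy, z, ⟨i, hi, hz⟩, h⟩

lemma sum_subset_iterAdd {ι : Type*} (s : Finset ι) (f : ι → Finset H) (T : Finset H)
    (hf : ∀ i ∈ s, f i ⊆ T) : ∑ i ∈ s, f i ⊆ iterAdd s.card T := by
  induction s using Finset.cons_induction with
  | empty => simp [iterAdd_zero]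
  | cons a s ha ih =>
    rw [Finset.sum_cons, Finset.card_cons, iterAdd_succ, add_comm (iterAdd s.card T) T]
    exact Finset.add_subset_add (hf a (Finset.mem_cons_self a s))
      (ih fun i hi => hf i (Finset.mem_cons_of_mem hi))

/-- Subset version of the Plünnecke–Ruzsa inequality (same summand), via the
Petridis minimizer. -/
lemma lemmaS (A B : Finset H) (hA : A.Nonempty) :
    ∃ A', A' ⊆ A ∧ A'.Nonempty ∧
      ∀ n, (A' + iterAdd n B).card * A.card ^ n ≤ A'.card * (A + B).card ^ n := by
  classical
  have hA' : A ∈ A.powerset.erase ∅ :=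
    Finset.mem_erase_of_ne_of_mem hA.ne_empty (Finset.mem_powerset_self _)
  obtain ⟨U, hU, hUmin⟩ := Finset.exists_min_image (A.powerset.erase ∅)
    (fun Z => ((Z + B).card : ℚ≥0) / Z.card) ⟨A, hA'⟩
  rw [Finset.mem_erase, Finset.mem_powerset, ← Finset.nonempty_iff_ne_empty] at hU
  obtain ⟨hUne, hUA⟩ := hU
  refine ⟨U, hUA, hUne, ?_⟩
  have hUpos : (0 : ℚ≥0) < U.card := by exact_mod_cast hUne.card_pos
  have hApos : (0 : ℚ≥0) < A.card := by exact_mod_cast hA.card_pos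
  have hUposn : 0 < U.card := hUne.card_pos
  have hmin : ∀ V ⊆ U, (U + B).card * V.card ≤ (V + B).card * U.card := by
    intro V hV
    obtain rfl | hVne := V.eq_empty_or_nonempty
    · simp
    have h := hUmin V (Finset.mem_erase_of_ne_of_mem hVne.ne_empty
      (Finset.mem_powerset.2 (hV.trans hUA)))
    have hVpos : (0 : ℚ≥0) < V.card := by exact_mod_cast hVne.card_pos
    exact_mod_cast (div_le_div_iff₀ hUpos hVpos).1 h
  have hRA : (U + B).card * A.card ≤ (A + B).card * U.card := by
    have h := hUmin A hA'
    exact_mod_cast (div_le_div_iff₀ hUpos hApos).1 h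
  intro n
  induction n with
  | zero => simp [iterAdd_zero]
  | succ n ih =>
    have h1 : (U + iterAdd (n + 1) B).card * U.card ≤
        (U + B).card * (U + iterAdd n B).card := by
      have h := Finset.pluennecke_petridis_inequality_add (iterAdd n B) hmin
      have he : U + iterAdd (n + 1) B = U + B + iterAdd n B := by
        rw [iterAdd_succ, ← add_assoc, add_right_comm]
      rw [he]
      rw [add_comm (iterAdd n B) U, add_right_comm U (iterAdd n B) B] at h
      exact h
    refine Nat.le_of_mul_le_mul_right ?_ hUposn
    calc (U + iterAdd (n + 1) B).card * A.card ^ (n + 1) * U.card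
        = ((U + iterAdd (n + 1) B).card * U.card) * A.card ^ (n + 1) := by ring
      _ ≤ ((U + B).card * (U + iterAdd n B).card) * A.card ^ (n + 1) :=
          Nat.mul_le_mul_right _ h1
      _ = ((U + B).card * A.card) * ((U + iterAdd n B).card * A.card ^ n) := by ring
      _ ≤ ((A + B).card * U.card) * (U.card * (A + B).card ^ n) :=
          Nat.mul_le_mul hRA ih
      _ = U.card * (A + B).card ^ (n + 1) * U.card := by ring

/-- Plünnecke–Ruzsa for different summands, with constant `k ^ k`, proportional form:
there is a nonempty `Z ⊆ A` with
`|Z + B₁ + ⋯ + B_k| · |A|^k ≤ k^k · |Z| · ∏ |A + B i|`. -/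
lemma lemA {k : ℕ} {G : Type} [AddCommGroup G] [DecidableEq G]
    (A : Finset G) (B : Fin k → Finset G) (hA : A.Nonempty) (hB : ∀ i, (B i).Nonempty) :
    ∃ Z, Z ⊆ A ∧ Z.Nonempty ∧
      (Z + ∑ i, B i).card * A.card ^ k ≤ k ^ k * (Z.card * ∏ i, (A + B i).card) := by
  classical
  set P : ℕ := ∏ i, (A + B i).card with hP
  have hABpos : ∀ i, 0 < (A + B i).card := fun i => (hA.add (hB i)).card_pos
  have hPpos : 0 < P := Finset.prod_pos fun i _ => hABpos i
  set t : Fin k → ℕ := fun i => ∏ j ∈ Finset.univ.erase i, (A + B j).card with ht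
  have htP : ∀ i, t i * (A + B i).card = P := fun i =>
    Finset.prod_erase_mul _ _ (Finset.mem_univ i)
  have htpos : ∀ i, 0 < t i := fun i =>
    Finset.prod_pos fun j _ => hABpos j
  -- boxes in the auxiliary coordinates
  set box : Fin k → Finset (Fin k → ℤ) := fun i =>
    Fintype.piFinset (fun j => if j = i then Finset.Icc (1 : ℤ) (t i) else 0) with hbox
  have hIcccard : ∀ i, (Finset.Icc (1 : ℤ) ((t i : ℤ))).card = t i := by
    intro i
    rw [Int.card_Icc]
    simp
  have hboxcard : ∀ i, (box i).card = t i := by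
    intro i
    rw [hbox]
    rw [Fintype.card_piFinset]
    have hcongr : ∀ j : Fin k,
        (if j = i then Finset.Icc (1 : ℤ) ((t i : ℤ)) else 0).card =
          if j = i then t i else 1 := by
      intro j
      split
      · exact hIcccard i
      · exact Finset.card_zero
    rw [Finset.prod_congr rfl fun j _ => hcongr j]
    rw [Finset.prod_ite_eq' Finset.univ i (fun _ => t i)]
    simp
  have hbox_mem_ne : ∀ i (u : Fin k → ℤ), u ∈ box i → ∀ j, j ≠ i → u j = 0 := by
    intro i u hu j hj
    rw [hbox, Fintype.mem_piFinset] at hu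
    have := hu j
    rw [if_neg hj] at this
    exact Finset.mem_zero.1 this
  have hbox_mem_eq : ∀ i (u : Fin k → ℤ), u ∈ box i → 1 ≤ u i := by
    intro i u hu
    rw [hbox, Fintype.mem_piFinset] at hu
    have := hu i
    rw [if_pos rfl] at this
    exact (Finset.mem_Icc.1 this).1
  set Bh : Fin k → Finset (G × (Fin k → ℤ)) := fun i => (B i) ×ˢ box i with hBh
  set Bu : Finset (G × (Fin k → ℤ)) := Finset.univ.biUnion Bh with hBu
  set Ah : Finset (G × (Fin k → ℤ)) := A ×ˢ (0 : Finset (Fin k → ℤ)) with hAh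
  have hAhne : Ah.Nonempty := hA.product ⟨0, Finset.mem_zero.2 rfl⟩
  have hAhcard : Ah.card = A.card := by
    rw [hAh, Finset.card_product]
    simp
  -- Ah + Bh i = (A + B i) ×ˢ box i
  have hAhBh : ∀ i, Ah + Bh i = (A + B i) ×ˢ box i := by
    intro i
    rw [hAh, hBh, product_add_product, zero_add]
  -- card of Ah + Bu
  have hABu : Ah + Bu = Finset.univ.biUnion fun i => (A + B i) ×ˢ box i := by
    rw [hBu, add_biUnion']
    exact Finset.biUnion_congr rfl fun i _ => hAhBh i
  have hdisj : ∀ i ∈ (Finset.univ : Finset (Fin k)), ∀ j ∈ (Finset.univ : Finset (Fin k)),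
      i ≠ j → Disjoint ((A + B i) ×ˢ box i) ((A + B j) ×ˢ box j) := by
    intro i _ j _ hij
    rw [Finset.disjoint_left]
    rintro ⟨x, u⟩ hxi hxj
    have hui : u ∈ box i := (Finset.mem_product.1 hxi).2
    have huj : u ∈ box j := (Finset.mem_product.1 hxj).2
    have h1 : 1 ≤ u i := hbox_mem_eq i u hui
    have h0 : u i = 0 := hbox_mem_ne j u huj i hij
    omega
  have hABucard : (Ah + Bu).card = k * P := by
    rw [hABu, Finset.card_biUnion hdisj]
    have : ∀ i, ((A + B i) ×ˢ box i).card = P := by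
      intro i
      rw [Finset.card_product, hboxcard i, mul_comm]
      exact htP i
    rw [Finset.sum_congr rfl fun i _ => this i]
    simp [Finset.card_univ, mul_comm]
  -- apply lemma S
  obtain ⟨A', hA'sub, hA'ne, hS⟩ := lemmaS Ah Bu hAhne
  -- extract Z
  set Z : Finset G := A'.image Prod.fst with hZ
  have hsnd : ∀ x ∈ A', Prod.snd x = 0 := by
    intro x hx
    have := hA'sub hx
    rw [hAh, Finset.mem_product] at this
    exact Finset.mem_zero.1 this.2
  have hA'eq : A' = Z ×ˢ (0 : Finset (Fin k → ℤ)) := by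
    ext ⟨a, b⟩
    rw [Finset.mem_product, Finset.mem_zero, hZ, Finset.mem_image]
    constructor
    · intro h
      exact ⟨⟨(a, b), h, rfl⟩, hsnd _ h⟩
    · rintro ⟨⟨⟨y1, y2⟩, hy, hfst⟩, rfl⟩
      have : y2 = 0 := hsnd _ hy
      cases hfst
      rw [show (0 : Fin k → ℤ) = y2 from this.symm]
      exact hy
  have hZcard : Z.card = A'.card := by
    rw [hZ]
    apply Finset.card_image_of_injOn
    intro x hx y hy hxy
    exact Prod.ext hxy ((hsnd x hx).trans (hsnd y hy).symm)
  have hZA : Z ⊆ A := by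
    intro z hz
    rw [hZ, Finset.mem_image] at hz
    obtain ⟨x, hx, rfl⟩ := hz
    have := hA'sub hx
    rw [hAh, Finset.mem_product] at this
    exact this.1
  have hZne : Z.Nonempty := hA'ne.image _
  -- sum of boxes
  have hsumbox : ∑ i, box i =
      Fintype.piFinset (fun j => Finset.Icc (1 : ℤ) (t j)) := by
    have hgen : ∀ (s : Finset (Fin k)) (f : Fin k → (Fin k → Finset ℤ)),
        ∑ i ∈ s, Fintype.piFinset (f i) =
          Fintype.piFinset (fun j => ∑ i ∈ s, f i j) := by
      intro s f
      induction s using Finset.cons_induction with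
      | empty =>
        simp only [Finset.sum_empty]
        ext u
        simp [Fintype.mem_piFinset, Finset.mem_zero, funext_iff]
      | cons a s ha ih =>
        simp only [Finset.sum_cons, ih]
        rw [← Fintype.piFinset_add]
    rw [hbox, hgen]
    congr 1
    funext j
    rw [Finset.sum_ite_eq Finset.univ j (fun i => Finset.Icc (1 : ℤ) (t i))]
    simp
  have hsumboxcard : (∑ i, box i).card = ∏ j, t j := by
    rw [hsumbox, Fintype.card_piFinset]
    exact Finset.prod_congr rfl fun j _ => hIcccard j
  set T : ℕ := ∏ j, t j with hT
  have hTP : T * P = P ^ k := by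
    rw [hT, hP, ← Finset.prod_mul_distrib]
    rw [Finset.prod_congr rfl fun i _ => htP i]
    simp [Finset.card_univ]
    rw [hP]
  -- lower bound for A' + iterAdd k Bu
  have hA'sum : A' + ∑ i, Bh i = (Z + ∑ i, B i) ×ˢ (∑ i, box i) := by
    rw [hA'eq, hBh, sum_product_add, product_add_product, zero_add]
  have hsub : A' + ∑ i, Bh i ⊆ A' + iterAdd k Bu := by
    apply Finset.add_subset_add_left
    have := sum_subset_iterAdd Finset.univ Bh Bu
      (fun i _ => Finset.subset_biUnion_of_mem Bh (Finset.mem_univ i))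
    rwa [Finset.card_univ, Fintype.card_fin] at this
  have hlow : (Z + ∑ i, B i).card * T ≤ (A' + iterAdd k Bu).card := by
    calc (Z + ∑ i, B i).card * T = (A' + ∑ i, Bh i).card := by
          rw [hA'sum, Finset.card_product, hsumboxcard]
      _ ≤ (A' + iterAdd k Bu).card := Finset.card_le_card hsub
  -- final chain
  have hTpos : 0 < T := Finset.prod_pos fun j _ => htpos j
  refine ⟨Z, hZA, hZne, ?_⟩
  refine Nat.le_of_mul_le_mul_right ?_ (Nat.mul_pos hTpos hPpos)
  calc (Z + ∑ i, B i).card * A.card ^ k * (T * P)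
      = ((Z + ∑ i, B i).card * T) * A.card ^ k * P := by ring
    _ ≤ (A' + iterAdd k Bu).card * A.card ^ k * P :=
        Nat.mul_le_mul_right _ (Nat.mul_le_mul_right _ hlow)
    _ = (A' + iterAdd k Bu).card * Ah.card ^ k * P := by rw [hAhcard]
    _ ≤ (A'.card * (Ah + Bu).card ^ k) * P := Nat.mul_le_mul_right _ (hS k)
    _ = Z.card * (k * P) ^ k * P := by rw [hABucard, hZcard]
    _ = (k ^ k * (Z.card * P)) * (P ^ k) := by ring
    _ = (k ^ k * (Z.card * P)) * (T * P) := by rw [hTP]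

end KSproof

/-- (Katz–Shen refinement of Plünnecke–Ruzsa) For every `0 < ε < 1` and `k ≥ 1` there is a
constant `C = C(ε, k) > 0` such that for all finite nonempty subsets `X, B 0, …, B (k-1)`
of an abelian group there is `X' ⊆ X` with `|X'| > (1-ε)|X|` and
`|X' + B 0 + ⋯ + B (k-1)| · |X|^(k-1) ≤ C · |X + B 0| ⋯ |X + B (k-1)|`. -/
theorem stmt_3 (ε : ℝ) (hε0 : 0 < ε) (hε1 : ε < 1) (k : ℕ) (hk : 0 < k) :
    ∃ C : ℝ, 0 < C ∧
      ∀ (G : Type) [AddCommGroup G] [DecidableEq G]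
        (X : Finset G) (B : Fin k → Finset G),
        X.Nonempty → (∀ i, (B i).Nonempty) →
        ∃ X' : Finset G, X' ⊆ X ∧ (1 - ε) * (X.card : ℝ) < (X'.card : ℝ) ∧
          ((X' + ∑ i, B i).card : ℝ) * (X.card : ℝ) ^ (k - 1) ≤
            C * ∏ i, ((X + B i).card : ℝ) := by
  classical
  have hkR : (0 : ℝ) < (k : ℝ) ^ k := pow_pos (by exact_mod_cast hk) k
  refine ⟨(k : ℝ) ^ k / ε ^ k, div_pos hkR (pow_pos hε0 k), ?_⟩
  intro G _ _ X B hX hB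
  have hXpos : (0 : ℝ) < X.card := by exact_mod_cast hX.card_pos
  have hεX : (0 : ℝ) < ε * X.card := by positivity
  set Coef : ℝ := (k : ℝ) ^ k / ε ^ k with hCoef
  have hprodnn : (0 : ℝ) ≤ ∏ i, ((X + B i).card : ℝ) :=
    Finset.prod_nonneg fun i _ => by positivity
  -- main recursion: carve pieces out of a remainder R
  have main : ∀ (n : ℕ) (R : Finset G), R.card ≤ n → R ⊆ X →
      ∃ X₁, X₁ ⊆ R ∧ ((R.card : ℝ) - X₁.card < ε * X.card) ∧
        ((X₁ + ∑ i, B i).card : ℝ) * (X.card : ℝ) ^ k ≤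
          Coef * (∏ i, ((X + B i).card : ℝ)) * X₁.card := by
    intro n
    induction n with
    | zero =>
      intro R hRn _
      have hR : R = ∅ := Finset.card_eq_zero.1 (Nat.le_zero.1 hRn)
      subst hR
      refine ⟨∅, Finset.Subset.refl _, by simpa using hεX, ?_⟩
      simp [Finset.empty_add]
    | succ n ih =>
      intro R hRn hRX
      by_cases hsmall : (R.card : ℝ) < ε * X.card
      · refine ⟨∅, Finset.empty_subset _, by simpa using hsmall, ?_⟩
        simp [Finset.empty_add]
      · push_neg at hsmall
        have hRne : R.Nonempty := by
          rw [← Finset.card_pos]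
          by_contra h
          push_neg at h
          have : R.card = 0 := Nat.le_zero.1 h
          rw [this] at hsmall
          simp only [Nat.cast_zero] at hsmall
          linarith
        obtain ⟨Z, hZR, hZne, hZ⟩ := KSproof.lemA R B hRne hB
        -- bound for the piece Z, over ℝ
        have hZbound : ((Z + ∑ i, B i).card : ℝ) * (X.card : ℝ) ^ k ≤
            Coef * (∏ i, ((X + B i).card : ℝ)) * Z.card := by
          have h1 : ((Z + ∑ i, B i).card : ℝ) * (R.card : ℝ) ^ k ≤
              (k : ℝ) ^ k * (Z.card * ∏ i, ((R + B i).card : ℝ)) := by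
            exact_mod_cast hZ
          have h2 : (∏ i, ((R + B i).card : ℝ)) ≤ ∏ i, ((X + B i).card : ℝ) := by
            apply Finset.prod_le_prod (fun i _ => by positivity)
            intro i _
            exact_mod_cast Finset.card_le_card (Finset.add_subset_add_right hRX)
          have h3 : (ε * X.card) ^ k ≤ (R.card : ℝ) ^ k :=
            pow_le_pow_left₀ (le_of_lt hεX) hsmall k
          have h4 : ((Z + ∑ i, B i).card : ℝ) * (ε * X.card) ^ k ≤
              (k : ℝ) ^ k * (Z.card * ∏ i, ((X + B i).card : ℝ)) := by
            calc ((Z + ∑ i, B i).card : ℝ) * (ε * X.card) ^ k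
                ≤ ((Z + ∑ i, B i).card : ℝ) * (R.card : ℝ) ^ k := by
                  apply mul_le_mul_of_nonneg_left h3 (by positivity)
              _ ≤ (k : ℝ) ^ k * (Z.card * ∏ i, ((R + B i).card : ℝ)) := h1
              _ ≤ (k : ℝ) ^ k * (Z.card * ∏ i, ((X + B i).card : ℝ)) := by
                  apply mul_le_mul_of_nonneg_left _ (by positivity)
                  exact mul_le_mul_of_nonneg_left h2 (by positivity)
          rw [mul_pow] at h4
          have hεk : (0 : ℝ) < ε ^ k := by positivity
          rw [hCoef]
          rw [div_mul_eq_mul_div, div_mul_eq_mul_div, le_div_iff₀ hεk]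
          calc ((Z + ∑ i, B i).card : ℝ) * (X.card : ℝ) ^ k * ε ^ k
              = ((Z + ∑ i, B i).card : ℝ) * (ε ^ k * (X.card : ℝ) ^ k) := by ring
            _ ≤ (k : ℝ) ^ k * (Z.card * ∏ i, ((X + B i).card : ℝ)) := h4
            _ = (k : ℝ) ^ k * (∏ i, ((X + B i).card : ℝ)) * Z.card := by ring
        -- recurse on R \ Z
        have hcard : (R \ Z).card ≤ n := by
          have h1 : (R \ Z).card < R.card := by
            apply Finset.card_lt_card
            rw [Finset.ssubset_iff_of_subset (Finset.sdiff_subset)]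
            obtain ⟨z, hz⟩ := hZne
            exact ⟨z, hZR hz, by simp [hz]⟩
          omega
        obtain ⟨X₁', hX₁'sub, hX₁'left, hX₁'bound⟩ := ih (R \ Z) hcard
          ((Finset.sdiff_subset).trans hRX)
        have hdisj : Disjoint Z X₁' :=
          Finset.disjoint_left.2 fun a haZ haX₁' =>
            (Finset.mem_sdiff.1 (hX₁'sub haX₁')).2 haZ
        refine ⟨Z ∪ X₁', Finset.union_subset hZR (hX₁'sub.trans Finset.sdiff_subset), ?_, ?_⟩
        · have hZcard : ((R \ Z).card : ℝ) = (R.card : ℝ) - Z.card := by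
            rw [Finset.card_sdiff_of_subset hZR]
            have := Finset.card_le_card hZR
            push_cast [Nat.cast_sub this]
            ring
          rw [Finset.card_union_of_disjoint hdisj]
          push_cast
          linarith [hX₁'left, hZcard]
        · have hunion : (Z ∪ X₁') + ∑ i, B i = (Z + ∑ i, B i) ∪ (X₁' + ∑ i, B i) :=
            Finset.union_add
          have hcardle : (((Z ∪ X₁') + ∑ i, B i).card : ℝ) ≤
              ((Z + ∑ i, B i).card : ℝ) + ((X₁' + ∑ i, B i).card : ℝ) := by
            rw [hunion]
            exact_mod_cast Finset.card_union_le _ _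
          rw [Finset.card_union_of_disjoint hdisj]
          push_cast
          calc (((Z ∪ X₁') + ∑ i, B i).card : ℝ) * (X.card : ℝ) ^ k
              ≤ (((Z + ∑ i, B i).card : ℝ) + ((X₁' + ∑ i, B i).card : ℝ)) *
                (X.card : ℝ) ^ k := by
                apply mul_le_mul_of_nonneg_right hcardle (by positivity)
            _ = ((Z + ∑ i, B i).card : ℝ) * (X.card : ℝ) ^ k +
                ((X₁' + ∑ i, B i).card : ℝ) * (X.card : ℝ) ^ k := by ring
            _ ≤ Coef * (∏ i, ((X + B i).card : ℝ)) * Z.card +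
                Coef * (∏ i, ((X + B i).card : ℝ)) * X₁'.card := by
                exact add_le_add hZbound hX₁'bound
            _ = Coef * (∏ i, ((X + B i).card : ℝ)) * ((Z.card : ℝ) + X₁'.card) := by ring
  obtain ⟨X', hX'sub, hX'left, hX'bound⟩ := main X.card X le_rfl (Finset.Subset.refl _)
  refine ⟨X', hX'sub, by linarith, ?_⟩
  have hX'le : (X'.card : ℝ) ≤ X.card := by
    exact_mod_cast Finset.card_le_card hX'sub
  have hCoefnn : (0 : ℝ) ≤ Coef := by rw [hCoef]; positivity
  have h5 : ((X' + ∑ i, B i).card : ℝ) * (X.card : ℝ) ^ k ≤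
      Coef * (∏ i, ((X + B i).card : ℝ)) * X.card := by
    calc ((X' + ∑ i, B i).card : ℝ) * (X.card : ℝ) ^ k
        ≤ Coef * (∏ i, ((X + B i).card : ℝ)) * X'.card := hX'bound
      _ ≤ Coef * (∏ i, ((X + B i).card : ℝ)) * X.card := by
          exact mul_le_mul_of_nonneg_left hX'le (mul_nonneg hCoefnn hprodnn)
  have hpow : (X.card : ℝ) ^ k = (X.card : ℝ) ^ (k - 1) * X.card := by
    conv_lhs => rw [show k = (k - 1) + 1 by omega]
    rw [pow_succ]
  rw [hpow, ← mul_assoc] at h5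
  exact le_of_mul_le_mul_right h5 hXpos
end

section
/- (Li–Roche-Newton subfield criterion) Let q be a prime power and let X be a finite subset of F_q with |X| ≥ 2. Suppose that X·D(X) ⊆ D(X) (i.e., x·r ∈ D(X) for all x ∈ X and r ∈ D(X)) and that 1 + D(X) ⊆ D(X) (i.e., 1 + r ∈ D(X) for all r ∈ D(X)). Then D(X) is equal (as a set) to the subfield of F_q generated by X. -/
open Finset Pointwise

/-- The set of directions determined by the Cartesian product `X × X`:
`D(X) = {(a₁ - a₂)/(a₃ - a₄) : a₁, a₂, a₃, a₄ ∈ X, a₃ ≠ a₄}`. -/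
def dirs {F : Type*} [Field F] [DecidableEq F] (X : Finset F) : Finset F :=
  (((X ×ˢ X) ×ˢ X ×ˢ X).filter fun x => x.2.1 ≠ x.2.2).image
    fun x => (x.1.1 - x.1.2) / (x.2.1 - x.2.2)

lemma mem_dirs_aux {F : Type*} [Field F] [DecidableEq F] {X : Finset F} {r : F} :
    r ∈ dirs X ↔ ∃ a ∈ X, ∃ b ∈ X, ∃ c ∈ X, ∃ d ∈ X, c ≠ d ∧ (a - b) / (c - d) = r := by
  simp only [dirs, Finset.mem_image, Finset.mem_filter, Finset.mem_product]
  constructor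
  · rintro ⟨⟨⟨a, b⟩, ⟨c, d⟩⟩, ⟨⟨⟨ha, hb⟩, hc, hd⟩, hcd⟩, rfl⟩
    exact ⟨a, ha, b, hb, c, hc, d, hd, hcd, rfl⟩
  · rintro ⟨a, ha, b, hb, c, hc, d, hd, hcd, rfl⟩
    exact ⟨⟨⟨a, b⟩, ⟨c, d⟩⟩, ⟨⟨⟨ha, hb⟩, hc, hd⟩, hcd⟩, rfl⟩

/-- surjectivity of an injective self-map of a finset. -/
lemma exists_preimage_aux {F : Type*} [DecidableEq F] {s : Finset F} {f : F → F}
    (hmaps : ∀ a ∈ s, f a ∈ s)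
    (hinj : ∀ a₁ ∈ s, ∀ a₂ ∈ s, f a₁ = f a₂ → a₁ = a₂) :
    ∀ b ∈ s, ∃ a ∈ s, f a = b := by
  intro b hb
  obtain ⟨a, ha, hab⟩ := Finset.surj_on_of_inj_on_of_card_le (fun a _ => f a)
    (fun a ha => hmaps a ha) (fun a₁ a₂ h₁ h₂ h => hinj a₁ h₁ a₂ h₂ h) le_rfl b hb
  exact ⟨a, ha, hab.symm⟩

/-- (Li–Roche-Newton subfield criterion) If `X ⊆ F_q` has `|X| ≥ 2`,
`X·D(X) ⊆ D(X)` and `1 + D(X) ⊆ D(X)`, then `D(X)` equals the subfield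
of `F_q` generated by `X`. -/
theorem stmt_4 {F : Type*} [Field F] [Fintype F] [DecidableEq F]
    (X : Finset F) (hX : 2 ≤ X.card)
    (hmul : ∀ x ∈ X, ∀ r ∈ dirs X, x * r ∈ dirs X)
    (hadd : ∀ r ∈ dirs X, 1 + r ∈ dirs X) :
    (dirs X : Set F) = (Subfield.closure (X : Set F) : Set F) := by
  classical
  obtain ⟨x₀, hx₀, y₀, hy₀, hxy⟩ := Finset.one_lt_card.mp hX
  have hsub0 : x₀ - y₀ ≠ 0 := sub_ne_zero.mpr hxy
  set D := dirs X with hD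
  -- basic elements
  have h0 : (0 : F) ∈ D :=
    mem_dirs_aux.mpr ⟨x₀, hx₀, x₀, hx₀, x₀, hx₀, y₀, hy₀, hxy, by simp⟩
  have h1 : (1 : F) ∈ D :=
    mem_dirs_aux.mpr ⟨x₀, hx₀, y₀, hy₀, x₀, hx₀, y₀, hy₀, hxy, div_self hsub0⟩
  -- negation
  have hneg : ∀ r ∈ D, -r ∈ D := by
    intro r hr
    obtain ⟨a, ha, b, hb, c, hc, d, hd, hcd, rfl⟩ := mem_dirs_aux.mp hr
    exact mem_dirs_aux.mpr ⟨b, hb, a, ha, c, hc, d, hd, hcd, by rw [← neg_div, neg_sub]⟩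
  -- division by a nonzero element of X
  have hdivX : ∀ x ∈ X, x ≠ 0 → ∀ r ∈ D, x⁻¹ * r ∈ D := by
    intro x hx hx0 r hr
    obtain ⟨t, ht, hxt⟩ := exists_preimage_aux (s := D) (f := fun t => x * t)
      (fun t ht => hmul x hx t ht)
      (fun a₁ _ a₂ _ h => mul_left_cancel₀ hx0 h) r hr
    rw [← hxt, inv_mul_cancel_left₀ hx0]
    exact ht
  -- addition by elements of X
  have haddX : ∀ x ∈ X, ∀ r ∈ D, x + r ∈ D := by
    intro x hx r hr
    rcases eq_or_ne x 0 with rfl | hx0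
    · simpa using hr
    · have h1' : 1 + x⁻¹ * r ∈ D := hadd _ (hdivX x hx hx0 r hr)
      have := hmul x hx _ h1'
      rwa [mul_add, mul_one, mul_inv_cancel_left₀ hx0] at this
  -- the additive stabilizer of D
  set S : Finset F := Finset.univ.filter (fun t => ∀ r ∈ D, t + r ∈ D) with hSdef
  have memS : ∀ t : F, t ∈ S ↔ ∀ r ∈ D, t + r ∈ D := by
    intro t; simp [hSdef]
  have hS0 : (0 : F) ∈ S := (memS 0).mpr (by intro r hr; simpa using hr)
  have hS1 : (1 : F) ∈ S := (memS 1).mpr hadd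
  have hSX : ∀ x ∈ X, x ∈ S := fun x hx => (memS x).mpr (haddX x hx)
  have hSadd : ∀ s ∈ S, ∀ t ∈ S, s + t ∈ S := by
    intro s hs t ht
    refine (memS _).mpr fun r hr => ?_
    rw [add_assoc]
    exact (memS s).mp hs _ ((memS t).mp ht r hr)
  have hSneg : ∀ s ∈ S, -s ∈ S := by
    intro s hs
    refine (memS _).mpr fun r hr => ?_
    obtain ⟨t, ht, hst⟩ := exists_preimage_aux (s := D) (f := fun t => s + t)
      (fun t ht => (memS s).mp hs t ht)
      (fun a₁ _ a₂ _ h => by exact add_left_cancel h) r hr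
    rw [← hst, neg_add_cancel_left]
    exact ht
  have hSmulX : ∀ x ∈ X, ∀ s ∈ S, x * s ∈ S := by
    intro x hx s hs
    rcases eq_or_ne x 0 with rfl | hx0
    · simpa using hS0
    · refine (memS _).mpr fun r hr => ?_
      have : x * (s + x⁻¹ * r) ∈ D :=
        hmul x hx _ ((memS s).mp hs _ (hdivX x hx hx0 r hr))
      rwa [mul_add, mul_inv_cancel_left₀ hx0] at this
  have hSsubX : ∀ a ∈ X, ∀ b ∈ X, ∀ s ∈ S, (a - b) * s ∈ S := by
    intro a ha b hb s hs
    have : a * s + -(b * s) ∈ S :=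
      hSadd _ (hSmulX a ha s hs) _ (hSneg _ (hSmulX b hb s hs))
    rwa [← sub_eq_add_neg, ← sub_mul] at this
  have hSdivX : ∀ c ∈ X, ∀ d ∈ X, c ≠ d → ∀ s ∈ S, s / (c - d) ∈ S := by
    intro c hc d hd hcd s hs
    have hcd0 : c - d ≠ 0 := sub_ne_zero.mpr hcd
    obtain ⟨t, ht, hct⟩ := exists_preimage_aux (s := S) (f := fun t => (c - d) * t)
      (fun t ht => hSsubX c hc d hd t ht)
      (fun a₁ _ a₂ _ h => mul_left_cancel₀ hcd0 h) s hs
    rw [← hct, mul_comm, mul_div_assoc, div_self hcd0, mul_one]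
    exact ht
  -- D ⊆ S, i.e. D is closed under addition
  have hDS : ∀ r ∈ D, r ∈ S := by
    intro r hr
    obtain ⟨a, ha, b, hb, c, hc, d, hd, hcd, rfl⟩ := mem_dirs_aux.mp hr
    have hab : (a - b : F) ∈ S := by
      have := hSsubX a ha b hb 1 hS1; rwa [mul_one] at this
    exact hSdivX c hc d hd hcd _ hab
  have hDadd : ∀ r ∈ D, ∀ s ∈ D, r + s ∈ D := fun r hr s hs => (memS r).mp (hDS r hr) s hs
  have hDsub : ∀ r ∈ D, ∀ s ∈ D, r - s ∈ D := by
    intro r hr s hs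
    rw [sub_eq_add_neg]
    exact hDadd r hr _ (hneg s hs)
  -- division by differences of X, within D
  have hDdiv : ∀ c ∈ X, ∀ d ∈ X, c ≠ d → ∀ r ∈ D, r / (c - d) ∈ D := by
    intro c hc d hd hcd r hr
    have hcd0 : c - d ≠ 0 := sub_ne_zero.mpr hcd
    obtain ⟨t, ht, hct⟩ := exists_preimage_aux (s := D) (f := fun t => (c - d) * t)
      (fun t ht => by
        have : c * t - d * t ∈ D := hDsub _ (hmul c hc t ht) _ (hmul d hd t ht)
        rwa [← sub_mul] at this)
      (fun a₁ _ a₂ _ h => mul_left_cancel₀ hcd0 h) r hr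
    rw [← hct, mul_comm, mul_div_assoc, div_self hcd0, mul_one]
    exact ht
  -- multiplicative closure
  have hDmul : ∀ r ∈ D, ∀ s ∈ D, r * s ∈ D := by
    intro r hr s hs
    obtain ⟨e, he, f, hf, g, hg, h, hh, hgh, rfl⟩ := mem_dirs_aux.mp hs
    have hnum : e * r - f * r ∈ D := hDsub _ (hmul e he r hr) _ (hmul f hf r hr)
    have := hDdiv g hg h hh hgh _ hnum
    have heq : (e * r - f * r) / (g - h) = r * ((e - f) / (g - h)) := by
      rw [mul_div_assoc']
      ring_nf
    rwa [heq] at this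
  -- inverses
  have hDinv : ∀ r ∈ D, r⁻¹ ∈ D := by
    intro r hr
    rcases eq_or_ne r 0 with rfl | hr0
    · simpa using h0
    obtain ⟨a, ha, b, hb, c, hc, d, hd, hcd, rfl⟩ := mem_dirs_aux.mp hr
    have hab : a ≠ b := by
      intro h; apply hr0; rw [h, sub_self, zero_div]
    refine mem_dirs_aux.mpr ⟨c, hc, d, hd, a, ha, b, hb, hab, ?_⟩
    rw [← one_div, one_div_div]
  -- X ⊆ D
  have hXD : ∀ x ∈ X, x ∈ D := by
    intro x hx
    have := hmul x hx 1 h1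
    rwa [mul_one] at this
  -- conclude
  ext z
  simp only [Finset.coe_sort_coe, Finset.mem_coe, SetLike.mem_coe]
  constructor
  · intro hz
    obtain ⟨a, ha, b, hb, c, hc, d, hd, hcd, rfl⟩ := mem_dirs_aux.mp hz
    exact div_mem (sub_mem (Subfield.subset_closure ha) (Subfield.subset_closure hb))
      (sub_mem (Subfield.subset_closure hc) (Subfield.subset_closure hd))
  · intro hz
    refine Subfield.closure_induction (fun x hx => hXD x hx) h1
      (fun x y _ _ hx hy => hDadd x hx y hy)
      (fun x _ hx => hneg x hx)
      (fun x _ hx => hDinv x hx)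
      (fun x y _ _ hx hy => hDmul x hx y hy) hz
end

section
/- Let p be a prime, q = p^2, and let A be a finite subset of F_q with 2 ≤ |A| < p. Fix y ∈ F_q and define the Rédei specialisation R_y(X) := ∏_{(a,b) ∈ A × A} (X − (y·a − b)) ∈ F_q[X], a monic polynomial of degree |A|^2. If |y·A − A| > p, where y·A − A := {y·a − a' : a, a' ∈ A}, then the remainder of X^q upon division by R_y(X) has nonzero formal derivative; equivalently, writing X^q + H(X) = R_y(X)·Q_y(X) with Q_y the quotient of X^q by R_y and deg H < |A|^2, the polynomial H does not lie in F_q[X^p]. -/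
open Finset Pointwise Polynomial

/-- Let `F` be the field with `q = p^2` elements and `A ⊆ F` with `2 ≤ |A| < p`.
For `y ∈ F` let `R_y(X) = ∏_{(a,b) ∈ A × A} (X - (y·a - b))`. If `|y·A - A| > p`, then
the remainder of `X^q` upon division by `R_y` has nonzero formal derivative
(equivalently, writing `X^q + H = R_y · Q_y`, the polynomial `H` does not lie
in `F[X^p]`). -/
theorem stmt_5 {F : Type*} [Field F] [Fintype F] [DecidableEq F]
    (p : ℕ) (hp : p.Prime) [CharP F p] (hq : Fintype.card F = p ^ 2)
    (A : Finset F) (hA2 : 2 ≤ A.card) (hAp : A.card < p)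
    (y : F) (hbig : p < (y • A - A).card) :
    derivative
      ((X ^ (p ^ 2) : F[X]) %ₘ ∏ x ∈ A ×ˢ A, (X - C (y * x.1 - x.2))) ≠ 0 := by
  intro hder
  set R : F[X] := ∏ x ∈ A ×ˢ A, (X - C (y * x.1 - x.2)) with hRdef
  have hR : R.Monic := monic_prod_of_monic _ _ fun x _ => monic_X_sub_C _
  set H : F[X] := (X ^ (p ^ 2) : F[X]) %ₘ R with hHdef
  have hp0 : p ≠ 0 := hp.ne_zero
  have hdegR : R.natDegree = A.card ^ 2 := by
    rw [hRdef, natDegree_prod_of_monic _ _ fun x _ => monic_X_sub_C _]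
    simp only [natDegree_X_sub_C]
    simp [sq]
  have hRne1 : R ≠ 1 := by
    intro h
    rw [h, natDegree_one] at hdegR
    have : 0 < A.card ^ 2 := by positivity
    omega
  have hdegH : H.natDegree < A.card ^ 2 := by
    rw [← hdegR]
    exact natDegree_modByMonic_lt _ hR hRne1
  have hAp2 : A.card ^ 2 < p ^ 2 := by
    have := Nat.pow_lt_pow_left hAp (n := 2) (by norm_num)
    exact this
  -- Frobenius squared is identity
  have hfr2 : ∀ c : F, (c ^ p) ^ p = c := fun c => by
    rw [← pow_mul, ← sq, ← hq, FiniteField.pow_card]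
  -- evaluation of H on S := y•A - A
  have hHc : ∀ c ∈ y • A - A, H.eval c = c := by
    intro c hc
    have hRc : R.eval c = 0 := by
      rw [Finset.mem_sub] at hc
      obtain ⟨u, hu, v, hv, huv⟩ := hc
      rw [Finset.mem_smul_finset] at hu
      obtain ⟨a, ha, rfl⟩ := hu
      rw [hRdef, eval_prod]
      refine Finset.prod_eq_zero (i := (a, v)) (Finset.mem_product.2 ⟨ha, hv⟩) ?_
      simp [smul_eq_mul, ← huv]
    have key := modByMonic_add_div ((X : F[X]) ^ (p ^ 2)) R
    have := congrArg (eval c) key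
    simp only [eval_add, eval_mul, eval_pow, eval_X, hRc, zero_mul, add_zero] at this
    rw [hHdef, this, ← hq, FiniteField.pow_card]
  -- H = expand (contract)
  set h : F[X] := contract p H with hhdef
  have hexp : expand F p h = H := expand_contract p hder hp0
  have hvals : ∀ c ∈ y • A - A, h.eval (c ^ p) = c := by
    intro c hc
    have := congrArg (eval c) hexp
    rw [expand_eval] at this
    rw [this, hHc c hc]
  set f : F[X] := X ^ p - h with hfdef
  have hcoefh : ∀ n, p ≤ n → h.coeff n = 0 := by
    intro n hn
    rw [hhdef, coeff_contract hp0]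
    apply coeff_eq_zero_of_natDegree_lt
    calc H.natDegree < p ^ 2 := lt_trans hdegH hAp2
    _ ≤ n * p := by rw [sq]; exact Nat.mul_le_mul_right p hn
  have hfne : f ≠ 0 := by
    intro h0
    have : f.coeff p = 0 := by rw [h0]; simp
    rw [hfdef, coeff_sub, coeff_X_pow, if_pos rfl, hcoefh p le_rfl] at this
    simp at this
  have hdegf : f.natDegree ≤ p := by
    rw [hfdef]
    refine natDegree_le_iff_coeff_eq_zero.2 fun N hN => ?_
    rw [coeff_sub, coeff_X_pow, if_neg (by omega), hcoefh N (le_of_lt hN), sub_zero]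
  -- the image set
  set T : Finset F := (y • A - A).image (· ^ p) with hTdef
  have hinj : Function.Injective (fun c : F => c ^ p) := by
    intro a b hab
    have := congrArg (· ^ p) hab
    simpa [hfr2] using this
  have hTcard : T.card = (y • A - A).card := Finset.card_image_of_injective _ hinj
  have hTroots : T ⊆ f.roots.toFinset := by
    intro t ht
    rw [hTdef, Finset.mem_image] at ht
    obtain ⟨c, hc, rfl⟩ := ht
    rw [Multiset.mem_toFinset, mem_roots hfne]
    simp only [IsRoot, hfdef, eval_sub, eval_pow, eval_X]
    rw [hvals c hc, hfr2, sub_self]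
  have : T.card ≤ p := by
    calc T.card ≤ f.roots.toFinset.card := Finset.card_le_card hTroots
    _ ≤ Multiset.card f.roots := Multiset.toFinset_card_le _
    _ ≤ f.natDegree := f.card_roots' 
    _ ≤ p := hdegf
  omega
end
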